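/- arXiv:2511.01480 — 6 statements merged into one kernel-verified Lean document; each statement's English description precedes it below -/
import Mathlib

section
/- Let p ≥ 2 and λ ≥ 0. Then for every s, t ∈ ℝ one has (J_λ(s) − J_λ(t))·(s − t) ≥ (4/p²)·|H_λ(s) − H_λ(t)|². -/
/-- `J_λ(s) = (|s| − λ)₊^{p−1} · s/|s|` for `s ≠ 0`, and `J_λ(0) = 0`. -/
noncomputable def Jfun (p lam s : ℝ) : ℝ :=
  if s = 0 then 0 else (max (|s| - lam) 0) ^ (p - 1) * (s / |s|)

/-- `H_λ(s) = (|s| − λ)₊^{p/2} · s/|s|` for `s ≠ 0`, and `H_λ(0) = 0`. -/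
noncomputable def Hfun (p lam s : ℝ) : ℝ :=
  if s = 0 then 0 else (max (|s| - lam) 0) ^ (p / 2) * (s / |s|)

/-!
Both maps factor through soft thresholding: `J_λ = g_{p-1} ∘ S_λ` and `H_λ = g_{p/2} ∘ S_λ`, with
the signed power `g_q x = |x|^q · sgn x` and `S_λ s = s - clamp_{[-λ, λ]} s`. As `S_λ` is monotone
and 1-Lipschitz and `g_{p-1}` is monotone, it suffices to treat `λ = 0`.
For `0 ≤ b ≤ a`, convexity of `x ↦ x^{p/2}` gives `a^{p/2} - b^{p/2} ≤ (p/2) a^{p/2-1} (a - b)`,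
and `a^{p/2-1} (a^{p/2} - b^{p/2}) ≤ a^{p-1} - b^{p-1}`; multiplying yields the bound with the
better constant `2/p`. Arguments of opposite signs reduce to AM-GM,
`2 (ac)^{p/2} ≤ a^{p-1} c + c^{p-1} a`, and two negative arguments to two positive ones by oddness.
-/

open Real

namespace Real

lemma rpow_sub_rpow_le_mul_sub {q a b : ℝ} (hq : 1 ≤ q) (hb : 0 ≤ b) (hba : b ≤ a) :
    a ^ q - b ^ q ≤ q * a ^ (q - 1) * (a - b) := by
  rcases (hb.trans hba).eq_or_lt with rfl | ha
  · simp [le_antisymm hba hb]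
  have bernoulli := one_add_mul_self_le_rpow_one_add (s := b / a - 1) (by
    have := div_nonneg hb ha.le; linarith) hq
  rw [add_sub_cancel, div_rpow hb ha.le, le_div_iff₀ (rpow_pos_of_pos ha q)] at bernoulli
  rw [rpow_sub_one ha.ne']
  have : q * (a ^ q / a) * (a - b) = q * a ^ q - q * (b / a) * a ^ q := by
    field_simp
  linarith

lemma rpow_sub_one_mul_self {x p : ℝ} (hx : 0 ≤ x) (hp : p ≠ 0) : x ^ (p - 1) * x = x ^ p := by
  rw [← rpow_add_one' hx (by simpa using hp), sub_add_cancel]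

lemma rpow_half_sq {x : ℝ} (hx : 0 ≤ x) (p : ℝ) : (x ^ (p / 2)) ^ 2 = x ^ p := by
  rw [← rpow_mul_natCast hx]; norm_num

end Real

lemma sq_rpow_half_add_le {p a c : ℝ} (hp : p ≠ 0) (ha : 0 ≤ a) (hc : 0 ≤ c) :
    (a ^ (p / 2) + c ^ (p / 2)) ^ 2 ≤ (a ^ (p - 1) + c ^ (p - 1)) * (a + c) := by
  set u := √(a ^ (p - 1) * c)
  set v := √(c ^ (p - 1) * a)
  have hu : u ^ 2 = a ^ (p - 1) * c := sq_sqrt (by positivity)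
  have hv : v ^ 2 = c ^ (p - 1) * a := sq_sqrt (by positivity)
  have huv : u * v = a ^ (p / 2) * c ^ (p / 2) := by
    rw [← sqrt_mul (by positivity), ← sqrt_sq (by positivity : 0 ≤ a ^ (p / 2) * c ^ (p / 2)),
      mul_pow, rpow_half_sq ha, rpow_half_sq hc, ← rpow_sub_one_mul_self ha hp,
      ← rpow_sub_one_mul_self hc hp]
    ring_nf
  have hA := rpow_half_sq ha p
  have hC := rpow_half_sq hc p
  rw [← rpow_sub_one_mul_self ha hp] at hA
  rw [← rpow_sub_one_mul_self hc hp] at hC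
  nlinarith [two_mul_le_add_sq u v]

lemma sq_rpow_half_sub_le {p a b : ℝ} (hp : 2 ≤ p) (hb : 0 ≤ b) (hba : b ≤ a) :
    2 / p * (a ^ (p / 2) - b ^ (p / 2)) ^ 2 ≤ (a ^ (p - 1) - b ^ (p - 1)) * (a - b) := by
  have ha := hb.trans hba
  have hq : 1 ≤ p / 2 := by linarith
  have tangent := rpow_sub_rpow_le_mul_sub hq hb hba
  have split : ∀ x : ℝ, 0 ≤ x → x ^ (p / 2 - 1) * x ^ (p / 2) = x ^ (p - 1) := fun x hx => by
    rw [← rpow_add' hx (by linarith)]; ring_nf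
  have hmono : b ^ (p / 2 - 1) ≤ a ^ (p / 2 - 1) := rpow_le_rpow hb hba (by linarith)
  have hAB : 0 ≤ a ^ (p / 2) - b ^ (p / 2) := sub_nonneg.2 (rpow_le_rpow hb hba (by linarith))
  have key : a ^ (p / 2 - 1) * (a ^ (p / 2) - b ^ (p / 2)) ≤ a ^ (p - 1) - b ^ (p - 1) := by
    rw [mul_sub, split a ha, ← split b hb]
    gcongr
  calc 2 / p * (a ^ (p / 2) - b ^ (p / 2)) ^ 2
      ≤ 2 / p * ((a ^ (p / 2) - b ^ (p / 2)) * (p / 2 * a ^ (p / 2 - 1) * (a - b))) := by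
        rw [sq]; gcongr
    _ = (a ^ (p / 2 - 1) * (a ^ (p / 2) - b ^ (p / 2))) * (a - b) := by
        field_simp
    _ ≤ (a ^ (p - 1) - b ^ (p - 1)) * (a - b) := by gcongr

noncomputable def signedPow (q x : ℝ) : ℝ := |x| ^ q * (x / |x|)

section signedPow

variable {q : ℝ}

lemma signedPow_of_nonneg (hq : q ≠ 0) {x : ℝ} (hx : 0 ≤ x) : signedPow q x = x ^ q := by
  rcases hx.eq_or_lt with rfl | hx
  · simp [signedPow, zero_rpow hq]
  · rw [signedPow, abs_of_pos hx, div_self hx.ne', mul_one]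

lemma signedPow_neg (x : ℝ) : signedPow q (-x) = -signedPow q x := by
  rw [signedPow, signedPow, abs_neg, neg_div, mul_neg]

lemma signedPow_of_nonpos (hq : q ≠ 0) {x : ℝ} (hx : x ≤ 0) : signedPow q x = -(-x) ^ q := by
  rw [← signedPow_of_nonneg hq (neg_nonneg.2 hx), signedPow_neg, neg_neg]

lemma signedPow_monotone (hq : 0 < q) : Monotone (signedPow q) := by
  intro y x hyx
  rcases le_total 0 y with hy | hy
  · rw [signedPow_of_nonneg hq.ne' hy, signedPow_of_nonneg hq.ne' (hy.trans hyx)]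
    exact rpow_le_rpow hy hyx hq.le
  rcases le_total x 0 with hx | hx
  · rw [signedPow_of_nonpos hq.ne' hy, signedPow_of_nonpos hq.ne' hx, neg_le_neg_iff]
    exact rpow_le_rpow (by linarith) (by linarith) hq.le
  · rw [signedPow_of_nonpos hq.ne' hy, signedPow_of_nonneg hq.ne' hx]
    have := rpow_nonneg (neg_nonneg.2 hy) q
    have := rpow_nonneg hx q
    linarith

lemma signedPow_nonneg_mul_sign (hq : q ≠ 0) {c s : ℝ} (hc : 0 ≤ c) (hs : s ≠ 0) :
    signedPow q (c * (s / |s|)) = c ^ q * (s / |s|) := by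
  have hsign : |(s / |s|)| = 1 := by rw [abs_div, abs_abs, div_self (abs_ne_zero.2 hs)]
  rcases hc.eq_or_lt with rfl | hc
  · simp [signedPow, zero_rpow hq]
  · rw [signedPow, abs_mul, hsign, abs_of_pos hc, mul_one, mul_div_cancel_left₀ _ hc.ne']

end signedPow

noncomputable def softThreshold (lam s : ℝ) : ℝ := s - max (min s lam) (-lam)

section softThreshold

variable {lam : ℝ}

lemma softThreshold_monotone : Monotone (softThreshold lam) := by
  intro t s hts
  simp only [softThreshold, max_def, min_def]
  split_ifs <;> linarith

lemma softThreshold_sub_le {s t : ℝ} (hts : t ≤ s) :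
    softThreshold lam s - softThreshold lam t ≤ s - t := by
  simp only [softThreshold, max_def, min_def]
  split_ifs <;> linarith

lemma softThreshold_eq_mul_sign (hlam : 0 ≤ lam) (s : ℝ) :
    softThreshold lam s = max (|s| - lam) 0 * (s / |s|) := by
  rcases lt_trichotomy s 0 with hs | rfl | hs
  · rw [abs_of_neg hs, div_neg, div_self hs.ne, softThreshold]
    simp only [max_def, min_def]
    split_ifs <;> linarith
  · simp [softThreshold, hlam]
  · rw [abs_of_pos hs, div_self hs.ne', softThreshold]
    simp only [max_def, min_def]
    split_ifs <;> linarith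

end softThreshold

lemma signedPow_softThreshold {q lam : ℝ} (hq : q ≠ 0) (hlam : 0 ≤ lam) (s : ℝ) :
    signedPow q (softThreshold lam s) =
      if s = 0 then 0 else max (|s| - lam) 0 ^ q * (s / |s|) := by
  split_ifs with hs
  · simp [hs, softThreshold, hlam, signedPow]
  · rw [softThreshold_eq_mul_sign hlam, signedPow_nonneg_mul_sign hq (le_max_right _ _) hs]

lemma signedPow_sub_sq_le {p x y : ℝ} (hp : 2 ≤ p) (hyx : y ≤ x) :
    4 / p ^ 2 * (signedPow (p / 2) x - signedPow (p / 2) y) ^ 2 ≤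
      (signedPow (p - 1) x - signedPow (p - 1) y) * (x - y) := by
  have hq : p / 2 ≠ 0 := by positivity
  have hr : p - 1 ≠ 0 := by linarith
  have hc : 4 / p ^ 2 ≤ 2 / p := by
    rw [div_le_div_iff₀ (by positivity) (by positivity)]; nlinarith
  have hc' : 2 / p ≤ 1 := by rw [div_le_one (by positivity)]; exact hp
  have nonneg_case : ∀ {a b : ℝ}, 0 ≤ b → b ≤ a →
      4 / p ^ 2 * (signedPow (p / 2) a - signedPow (p / 2) b) ^ 2 ≤
        (signedPow (p - 1) a - signedPow (p - 1) b) * (a - b) := fun hb hba => by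
    rw [signedPow_of_nonneg hq hb, signedPow_of_nonneg hq (hb.trans hba),
      signedPow_of_nonneg hr hb, signedPow_of_nonneg hr (hb.trans hba)]
    exact (mul_le_mul_of_nonneg_right hc (sq_nonneg _)).trans (sq_rpow_half_sub_le hp hb hba)
  rcases le_total 0 y with hy | hy
  · exact nonneg_case hy hyx
  rcases le_total x 0 with hx | hx
  · convert nonneg_case (neg_nonneg.2 hx) (neg_le_neg hyx) using 1 <;>
      simp only [signedPow_neg] <;> ring
  · rw [signedPow_of_nonneg hq hx, signedPow_of_nonneg hr hx, signedPow_of_nonpos hq hy,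
      signedPow_of_nonpos hr hy]
    have h := sq_rpow_half_add_le (by positivity) hx (neg_nonneg.2 hy)
    calc 4 / p ^ 2 * (x ^ (p / 2) - -(-y) ^ (p / 2)) ^ 2
        ≤ 1 * (x ^ (p / 2) + (-y) ^ (p / 2)) ^ 2 := by
          rw [sub_neg_eq_add]; gcongr; linarith
      _ ≤ (x ^ (p - 1) - -(-y) ^ (p - 1)) * (x - y) := by linarith

/-- Let `p ≥ 2` and `λ ≥ 0`. Then for every `s, t ∈ ℝ` one has
`(J_λ(s) − J_λ(t))·(s − t) ≥ (4/p²)·|H_λ(s) − H_λ(t)|²`. -/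
theorem stmt0 (p lam : ℝ) (hp : 2 ≤ p) (hlam : 0 ≤ lam) (s t : ℝ) :
    (Jfun p lam s - Jfun p lam t) * (s - t) ≥
      4 / p ^ 2 * |Hfun p lam s - Hfun p lam t| ^ 2 := by
  rw [ge_iff_le, sq_abs]
  wlog hts : t ≤ s generalizing s t
  · convert this t s (le_of_not_ge hts) using 1 <;> ring
  have hJ (x : ℝ) : Jfun p lam x = signedPow (p - 1) (softThreshold lam x) :=
    (signedPow_softThreshold (by linarith) hlam x).symm
  have hH (x : ℝ) : Hfun p lam x = signedPow (p / 2) (softThreshold lam x) :=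
    (signedPow_softThreshold (by linarith) hlam x).symm
  have hw := softThreshold_monotone (lam := lam) hts
  rw [hJ, hJ, hH, hH]
  calc _ ≤ _ := signedPow_sub_sq_le hp hw
    _ ≤ _ := mul_le_mul_of_nonneg_left (softThreshold_sub_le hts)
        (sub_nonneg.2 (signedPow_monotone (by linarith) hw))
end

section
/- Let v : ℝ → [0, ∞) be a convex function of class C² (so v'' is continuous and nonnegative), and define 𝒢(s) = ∫₀^s √(v''(τ)) dτ. Then for every a, b ∈ ℝ one has (v'(a) − v'(b))·(a − b) ≥ |𝒢(a) − 𝒢(b)|². -/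
/-! Write `I = 𝒢(a) - 𝒢(b) = ∫_b^a √v''` and note `v'(a) - v'(b) = ∫_b^a v''`, with `v'' ≥ 0`
by convexity. The inequality is then Cauchy–Schwarz on the interval between `b` and `a`:
`(∫_b^a √v'')² ≤ (a - b) ∫_b^a (√v'')²`. -/

open intervalIntegral MeasureTheory

theorem ConvexOn.deriv_deriv_nonneg {f : ℝ → ℝ} (hfc : ConvexOn ℝ Set.univ f)
    (hf : Differentiable ℝ f) (x : ℝ) : 0 ≤ deriv (deriv f) x :=
  (monotoneOn_univ.mp (hfc.monotoneOn_deriv fun y _ => hf y)).deriv_nonneg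

theorem intervalIntegral.integral_sub_const_sq {f : ℝ → ℝ} {a b : ℝ}
    (hf : IntervalIntegrable f volume a b)
    (hf2 : IntervalIntegrable (fun x => f x ^ 2) volume a b) (c : ℝ) :
    ∫ x in a..b, (f x - c) ^ 2 =
      (b - a) * (c * c) + (-2 * ∫ x in a..b, f x) * c + ∫ x in a..b, f x ^ 2 := by
  have hexpand : (fun x => (f x - c) ^ 2) = fun x => f x ^ 2 - 2 * c * f x + c ^ 2 := by
    ext x; ring
  rw [hexpand, integral_add (hf2.sub (hf.const_mul _)) intervalIntegrable_const,
    integral_sub hf2 (hf.const_mul _), integral_const_mul, integral_const, smul_eq_mul]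
  ring

/-- Cauchy–Schwarz for interval integrals; `b - a` may be negative. -/
theorem intervalIntegral.sq_integral_le_mul_integral_sq {f : ℝ → ℝ} {a b : ℝ}
    (hf : IntervalIntegrable f volume a b)
    (hf2 : IntervalIntegrable (fun x => f x ^ 2) volume a b) :
    (∫ x in a..b, f x) ^ 2 ≤ (b - a) * ∫ x in a..b, f x ^ 2 := by
  wlog hab : a ≤ b generalizing a b
  · have h := this hf.symm hf2.symm (le_of_not_ge hab)
    rw [integral_symm b a, integral_symm b a (f := fun x => f x ^ 2), neg_sq]
    linarith
  have hquad : ∀ c : ℝ,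
      0 ≤ (b - a) * (c * c) + (-2 * ∫ x in a..b, f x) * c + ∫ x in a..b, f x ^ 2 := fun c => by
    rw [← integral_sub_const_sq hf hf2]
    exact integral_nonneg hab fun x _ => sq_nonneg _
  have h := discrim_le_zero hquad
  rw [discrim] at h
  linarith

theorem stmt1_general (v : ℝ → ℝ) (hv : ContDiff ℝ 2 v)
    (hconv : ConvexOn ℝ Set.univ v) (a b : ℝ) :
    (deriv v a - deriv v b) * (a - b) ≥
      |(∫ τ in (0:ℝ)..a, Real.sqrt (deriv (deriv v) τ)) -
        (∫ τ in (0:ℝ)..b, Real.sqrt (deriv (deriv v) τ))| ^ 2 := by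
  have hv' : ContDiff ℝ 1 (deriv v) := hv.deriv'
  have hv''_cont : Continuous (deriv (deriv v)) := hv'.continuous_deriv le_rfl
  have hv''_nonneg := hconv.deriv_deriv_nonneg (hv.differentiable two_ne_zero)
  have hsqrt_cont : Continuous fun τ => Real.sqrt (deriv (deriv v) τ) := hv''_cont.sqrt
  have hftc : ∫ τ in b..a, deriv (deriv v) τ = deriv v a - deriv v b :=
    integral_deriv_eq_sub (fun x _ => hv'.differentiable one_ne_zero x)
      (hv''_cont.intervalIntegrable b a)
  rw [integral_interval_sub_left (hsqrt_cont.intervalIntegrable 0 a)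
    (hsqrt_cont.intervalIntegrable 0 b), sq_abs, ge_iff_le]
  calc (∫ τ in b..a, Real.sqrt (deriv (deriv v) τ)) ^ 2
      ≤ (a - b) * ∫ τ in b..a, Real.sqrt (deriv (deriv v) τ) ^ 2 :=
        sq_integral_le_mul_integral_sq (hsqrt_cont.intervalIntegrable b a)
          ((hsqrt_cont.pow 2).intervalIntegrable b a)
    _ = (deriv v a - deriv v b) * (a - b) := by
        simp only [Real.sq_sqrt (hv''_nonneg _), hftc, mul_comm]

/-- Let `v : ℝ → [0, ∞)` be a convex function of class `C²`, and define
`𝒢(s) = ∫₀^s √(v''(τ)) dτ`. Then for every `a, b ∈ ℝ` one has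
`(v'(a) − v'(b))·(a − b) ≥ |𝒢(a) − 𝒢(b)|²`. -/
theorem stmt1 (v : ℝ → ℝ) (hv0 : ∀ x, 0 ≤ v x) (hv : ContDiff ℝ 2 v)
    (hconv : ConvexOn ℝ Set.univ v) (a b : ℝ) :
    (deriv v a - deriv v b) * (a - b) ≥
      |(∫ τ in (0:ℝ)..a, Real.sqrt (deriv (deriv v) τ)) -
        (∫ τ in (0:ℝ)..b, Real.sqrt (deriv (deriv v) τ))| ^ 2 :=
  stmt1_general v hv hconv a b
end

section
/- Let 0 ≤ ρ₀ < ρ₁ < ∞ and let Z : [ρ₀, ρ₁] → [0, ∞) be a bounded function satisfying Z(ρ) ≤ θ·Z(r) + A/(r − ρ)^α + B/(r − ρ)^β + C for all ρ₀ ≤ ρ < r ≤ ρ₁, where θ ∈ (0, 1), A, B, C ≥ 0 and α > β > 0. Then there exists a constant κ > 0, depending only on α and θ, such that Z(ρ₀) ≤ κ·(A/(ρ₁ − ρ₀)^α + B/(ρ₁ − ρ₀)^β + C). -/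
/-!
Iterate the inequality along the radii `t k = ρ₁ - τ ^ k (ρ₁ - ρ₀)`, whose gaps
`τ ^ k (1 - τ) (ρ₁ - ρ₀)` shrink geometrically. After `k` steps, `Z ρ₀` is bounded by
`θ ^ k Z (t k)` plus the right-hand-side terms at the gaps weighted by `θ ^ i`. Choosing
`τ ^ (2α) = θ`, the `i`-th weighted term is at most `(τ ^ α) ^ i` times the term at the gap
`(1 - τ) (ρ₁ - ρ₀)`, so the errors sum to a geometric series, while `θ ^ k Z (t k) → 0`
because `Z` is bounded.
-/

open Finset Filter

namespace Giusti

noncomputable def forcing (A B C α β r : ℝ) : ℝ := A / r ^ α + B / r ^ β + C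

lemma forcing_nonneg {A B C α β r : ℝ} (hA : 0 ≤ A) (hB : 0 ≤ B) (hC : 0 ≤ C) (hr : 0 ≤ r) :
    0 ≤ forcing A B C α β r := by
  unfold forcing; positivity

lemma rpow_mul_div_mul_rpow_le {l s X α γ : ℝ} (hl0 : 0 < l) (hl1 : l ≤ 1) (hγα : γ ≤ α)
    (hs : 0 ≤ s) (hX : 0 ≤ X) : l ^ α * (X / (l * s) ^ γ) ≤ X / s ^ γ := by
  have hlγ : l ^ α ≤ l ^ γ := Real.rpow_le_rpow_of_exponent_ge hl0 hl1 hγα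
  rw [Real.mul_rpow hl0.le hs, mul_comm (l ^ γ), ← div_div, mul_div_assoc',
    div_le_iff₀ (by positivity), mul_comm (X / s ^ γ)]
  exact mul_le_mul_of_nonneg_right hlγ (by positivity)

lemma rpow_mul_forcing_le {l s A B C α β : ℝ} (hl0 : 0 < l) (hl1 : l ≤ 1) (hα : 0 ≤ α)
    (hβα : β ≤ α) (hs : 0 ≤ s) (hA : 0 ≤ A) (hB : 0 ≤ B) (hC : 0 ≤ C) :
    l ^ α * forcing A B C α β (l * s) ≤ forcing A B C α β s := by
  have hC' : l ^ α * C ≤ C := mul_le_of_le_one_left hC (Real.rpow_le_one hl0.le hl1 hα)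
  have hA' := rpow_mul_div_mul_rpow_le (γ := α) hl0 hl1 le_rfl hs hA
  have hB' := rpow_mul_div_mul_rpow_le hl0 hl1 hβα hs hB
  unfold forcing
  rw [mul_add, mul_add]
  linarith

lemma forcing_mul_le {c d A B C α β : ℝ} (hc0 : 0 < c) (hc1 : c ≤ 1) (hα : 0 ≤ α)
    (hβα : β ≤ α) (hd : 0 ≤ d) (hA : 0 ≤ A) (hB : 0 ≤ B) (hC : 0 ≤ C) :
    forcing A B C α β (c * d) ≤ c ^ (-α) * forcing A B C α β d := by
  rw [Real.rpow_neg hc0.le, ← div_eq_inv_mul, le_div_iff₀' (by positivity)]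
  exact rpow_mul_forcing_le hc0 hc1 hα hβα hd hA hB hC

lemma le_pow_mul_add_sum_of_le_mul_add {θ : ℝ} {z e : ℕ → ℝ} (hθ : 0 ≤ θ)
    (hstep : ∀ k, z k ≤ θ * z (k + 1) + e k) (k : ℕ) :
    z 0 ≤ θ ^ k * z k + ∑ i ∈ range k, θ ^ i * e i := by
  induction k with
  | zero => simp
  | succ k ih =>
    calc z 0 ≤ θ ^ k * z k + ∑ i ∈ range k, θ ^ i * e i := ih
      _ ≤ θ ^ k * (θ * z (k + 1) + e k) + ∑ i ∈ range k, θ ^ i * e i := by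
          gcongr
          exact hstep k
      _ = θ ^ (k + 1) * z (k + 1) + ∑ i ∈ range (k + 1), θ ^ i * e i := by
          rw [sum_range_succ, pow_succ]; ring

lemma le_of_le_mul_add {θ S : ℝ} {z e : ℕ → ℝ} (hθ0 : 0 ≤ θ) (hθ1 : θ < 1)
    (hz : BddAbove (Set.range z)) (hstep : ∀ k, z k ≤ θ * z (k + 1) + e k)
    (hS : ∀ k, ∑ i ∈ range k, θ ^ i * e i ≤ S) : z 0 ≤ S := by
  obtain ⟨K, hK⟩ := hz
  have hbound : ∀ k, z 0 ≤ θ ^ k * max K 0 + S := fun k =>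
    calc z 0 ≤ θ ^ k * z k + ∑ i ∈ range k, θ ^ i * e i :=
          le_pow_mul_add_sum_of_le_mul_add hθ0 hstep k
      _ ≤ θ ^ k * max K 0 + S := by
          gcongr
          · exact (hK (Set.mem_range_self k)).trans (le_max_left K 0)
          · exact hS k
  have hlim : Tendsto (fun k : ℕ => θ ^ k * max K 0 + S) atTop (nhds (0 * max K 0 + S)) :=
    ((tendsto_pow_atTop_nhds_zero_of_lt_one hθ0 hθ1).mul_const _).add tendsto_const_nhds
  simpa using ge_of_tendsto' hlim hbound

theorem le_forcing_div_of_le_mul_add {α β θ τ ρ₀ ρ₁ A B C : ℝ} {Z : ℝ → ℝ}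
    (hθ0 : 0 ≤ θ) (hθτ : θ ≤ (τ ^ α) ^ 2) (hτ0 : 0 < τ) (hτ1 : τ < 1) (hα : 0 < α)
    (hβα : β ≤ α) (hA : 0 ≤ A) (hB : 0 ≤ B) (hC : 0 ≤ C) (hρ : ρ₀ < ρ₁)
    (hbdd : BddAbove (Z '' Set.Icc ρ₀ ρ₁))
    (hZ : ∀ ρ r, ρ₀ ≤ ρ → ρ < r → r ≤ ρ₁ → Z ρ ≤ θ * Z r + forcing A B C α β (r - ρ)) :
    Z ρ₀ ≤ forcing A B C α β ((1 - τ) * (ρ₁ - ρ₀)) / (1 - τ ^ α) := by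
  set q := τ ^ α
  set s := (1 - τ) * (ρ₁ - ρ₀)
  have hs : 0 < s := mul_pos (by linarith) (by linarith)
  have hq0 : 0 < q := Real.rpow_pos_of_pos hτ0 α
  have hq1 : q < 1 := Real.rpow_lt_one hτ0.le hτ1 hα
  set t : ℕ → ℝ := fun k => ρ₁ - τ ^ k * (ρ₁ - ρ₀)
  have hτk0 (k : ℕ) : 0 < τ ^ k := pow_pos hτ0 k
  have hτk1 (k : ℕ) : τ ^ k ≤ 1 := pow_le_one₀ hτ0.le hτ1.le
  have ht_mem (k : ℕ) : t k ∈ Set.Icc ρ₀ ρ₁ := by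
    constructor <;> nlinarith [hτk0 k, hτk1 k]
  have ht_gap (k : ℕ) : t (k + 1) - t k = τ ^ k * s := by simp only [t, s]; ring
  set e : ℕ → ℝ := fun k => forcing A B C α β (τ ^ k * s)
  have he (k : ℕ) : θ ^ k * e k ≤ q ^ k * forcing A B C α β s :=
    calc θ ^ k * e k ≤ ((τ ^ α) ^ 2) ^ k * e k := by
          gcongr
          exact forcing_nonneg hA hB hC (mul_pos (hτk0 k) hs).le
      _ = q ^ k * ((τ ^ k) ^ α * e k) := by
          rw [← Real.rpow_pow_comm hτ0.le]; ring
      _ ≤ q ^ k * forcing A B C α β s := by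
          gcongr
          exact rpow_mul_forcing_le (hτk0 k) (hτk1 k) hα.le hβα hs.le hA hB hC
  have hθ1 : θ < 1 := hθτ.trans_lt (by nlinarith)
  have ht0 : t 0 = ρ₀ := by simp [t]
  rw [← ht0]
  refine le_of_le_mul_add (z := fun k => Z (t k)) (e := e) hθ0 hθ1 ?_ ?_ ?_
  · exact BddAbove.mono (Set.range_subset_iff.2 fun k => Set.mem_image_of_mem Z (ht_mem k)) hbdd
  · intro k
    have := hZ (t k) (t (k + 1)) (ht_mem k).1 (by nlinarith [ht_gap k, hτk0 k]) (ht_mem _).2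
    rwa [ht_gap] at this
  · intro k
    calc ∑ i ∈ range k, θ ^ i * e i ≤ ∑ i ∈ range k, q ^ i * forcing A B C α β s :=
          sum_le_sum fun i _ => he i
      _ = (∑ i ∈ range k, q ^ i) * forcing A B C α β s := (sum_mul ..).symm
      _ ≤ 1 / (1 - q) * forcing A B C α β s := by
          gcongr
          · exact forcing_nonneg hA hB hC hs.le
          · simpa [← range_eq_Ico] using geom_sum_Ico_le_of_lt_one (m := 0) (n := k) hq0.le hq1
      _ = forcing A B C α β s / (1 - q) := by ring

end Giusti

open Giusti in
/-- **Giusti's iteration lemma.** Let `0 ≤ ρ₀ < ρ₁ < ∞` and let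
`Z : [ρ₀, ρ₁] → [0, ∞)` be a bounded function satisfying
`Z(ρ) ≤ θ·Z(r) + A/(r − ρ)^α + B/(r − ρ)^β + C` for all `ρ₀ ≤ ρ < r ≤ ρ₁`,
where `θ ∈ (0, 1)`, `A, B, C ≥ 0` and `α > β > 0`. Then there exists a constant
`κ > 0`, depending only on `α` and `θ`, such that
`Z(ρ₀) ≤ κ·(A/(ρ₁ − ρ₀)^α + B/(ρ₁ − ρ₀)^β + C)`. -/
theorem stmt2 (α θ : ℝ) (hθ : θ ∈ Set.Ioo (0:ℝ) 1) :
    ∃ κ : ℝ, 0 < κ ∧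
      ∀ (β : ℝ), 0 < β → β < α →
      ∀ (ρ₀ ρ₁ : ℝ), 0 ≤ ρ₀ → ρ₀ < ρ₁ →
      ∀ (Z : ℝ → ℝ) (A B C : ℝ), 0 ≤ A → 0 ≤ B → 0 ≤ C →
      (∀ ρ ∈ Set.Icc ρ₀ ρ₁, 0 ≤ Z ρ) →
      (∃ K : ℝ, ∀ ρ ∈ Set.Icc ρ₀ ρ₁, Z ρ ≤ K) →
      (∀ ρ r : ℝ, ρ₀ ≤ ρ → ρ < r → r ≤ ρ₁ →
        Z ρ ≤ θ * Z r + A / (r - ρ) ^ α + B / (r - ρ) ^ β + C) →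
      Z ρ₀ ≤ κ * (A / (ρ₁ - ρ₀) ^ α + B / (ρ₁ - ρ₀) ^ β + C) := by
  obtain ⟨hθ0, hθ1⟩ := hθ
  rcases le_or_gt α 0 with hα | hα
  · exact ⟨1, one_pos, fun β hβ hβα => absurd (hβ.trans hβα) hα.not_gt⟩
  set τ := θ ^ (2 * α)⁻¹
  have hτ0 : 0 < τ := Real.rpow_pos_of_pos hθ0 _
  have hτ1 : τ < 1 := Real.rpow_lt_one hθ0.le hθ1 (by positivity)
  have hτα : (τ ^ α) ^ 2 = θ := by
    rw [← Real.rpow_mul hθ0.le, ← Real.rpow_mul_natCast hθ0.le]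
    rw [show (2 * α)⁻¹ * α * ((2 : ℕ) : ℝ) = 1 by field_simp; norm_num, Real.rpow_one]
  have hq1 : τ ^ α < 1 := Real.rpow_lt_one hτ0.le hτ1 hα
  refine ⟨(1 - τ) ^ (-α) / (1 - τ ^ α),
    div_pos (Real.rpow_pos_of_pos (by linarith) _) (by linarith), ?_⟩
  intro β _ hβα ρ₀ ρ₁ _ hρ Z A B C hA hB hC _ ⟨K, hK⟩ hZ
  calc Z ρ₀ ≤ forcing A B C α β ((1 - τ) * (ρ₁ - ρ₀)) / (1 - τ ^ α) :=
        le_forcing_div_of_le_mul_add hθ0.le hτα.ge hτ0 hτ1 hα hβα.le hA hB hC hρ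
          ⟨K, Set.forall_mem_image.2 hK⟩ fun ρ r h₀ h h₁ => by
            simpa only [forcing, add_assoc] using hZ ρ r h₀ h h₁
    _ ≤ (1 - τ) ^ (-α) * forcing A B C α β (ρ₁ - ρ₀) / (1 - τ ^ α) := by
        gcongr
        exact forcing_mul_le (by linarith) (by linarith) hα.le hβα.le (by linarith) hA hB hC
    _ = _ := by unfold forcing; ring
end

section
/- Let n ≥ 1, M ≥ 0 a real number, δ₁, …, δ_n ≥ 0 and ε ∈ (0, 1). Set δ = 1 + max{δ₁, …, δ_n}. For ξ ∈ ℝⁿ define 𝒱 = (1/(2(δ+1)))·max_{1 ≤ i ≤ n} |ξ_i|. Then ∑_{k=1}^n (|ξ_k| − δ_k − ε)₊² · |ξ_k|^{2M} ≥ (2(δ+1))^{2M+2} · (𝒱 − 1/2)₊² · 𝒱^{2M}. -/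
/-- Maximum of the values of `f : Fin n → ℝ` (for `n ≥ 1`). -/
noncomputable def vecMax {n : ℕ} (hn : 1 ≤ n) (f : Fin n → ℝ) : ℝ :=
  Finset.univ.sup' ⟨⟨0, hn⟩, Finset.mem_univ _⟩ f

/-- Let `n ≥ 1`, `M ≥ 0` a real number, `δ₁, …, δ_n ≥ 0` and `ε ∈ (0, 1)`.
Set `δ = 1 + max δᵢ` and `𝒱 = (1/(2(δ+1)))·maxᵢ |ξᵢ|`. Then
`∑ₖ (|ξₖ| − δₖ − ε)₊² · |ξₖ|^{2M} ≥ (2(δ+1))^{2M+2} · (𝒱 − 1/2)₊² · 𝒱^{2M}`. -/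
theorem stmt10 (n : ℕ) (hn : 1 ≤ n) (M : ℝ) (hM : 0 ≤ M) (δ : Fin n → ℝ)
    (hδ : ∀ i, 0 ≤ δ i) (ε : ℝ) (hε : ε ∈ Set.Ioo (0:ℝ) 1) (ξ : Fin n → ℝ) :
    let D : ℝ := 1 + vecMax hn δ
    let V : ℝ := 1 / (2 * (D + 1)) * vecMax hn fun i => |ξ i|
    (2 * (D + 1)) ^ (2 * M + 2) * (max (V - 1 / 2) 0) ^ 2 * V ^ (2 * M) ≤
      ∑ k, (max (|ξ k| - δ k - ε) 0) ^ 2 * |ξ k| ^ (2 * M) := by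
  intro D V
  obtain ⟨hε0, hε1⟩ := hε
  have hsum_nonneg : ∀ k ∈ Finset.univ,
      0 ≤ (max (|ξ k| - δ k - ε) 0) ^ 2 * |ξ k| ^ (2 * M) := by
    intro k _
    have h1 : (0:ℝ) ≤ (max (|ξ k| - δ k - ε) 0) ^ 2 := sq_nonneg _
    have h2 : (0:ℝ) ≤ |ξ k| ^ (2 * M) := Real.rpow_nonneg (abs_nonneg _) _
    exact mul_nonneg h1 h2
  obtain ⟨i, -, hi⟩ := Finset.exists_mem_eq_sup'
    (⟨⟨0, hn⟩, Finset.mem_univ _⟩ : Finset.univ.Nonempty) (fun i => |ξ i|)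
  set A : ℝ := vecMax hn fun i => |ξ i| with hAdef
  have hAi : A = |ξ i| := hi
  have hA0 : 0 ≤ A := hAi ▸ abs_nonneg _
  have hδi : δ i ≤ vecMax hn δ := Finset.le_sup' δ (Finset.mem_univ i)
  have hD1 : 1 + δ i ≤ D := by simp only [D]; linarith
  have hδ0 : 0 ≤ vecMax hn δ := le_trans (hδ i) hδi
  have hD : (1:ℝ) ≤ D := by simp only [D]; linarith
  have h2D : (0:ℝ) < 2 * (D + 1) := by linarith
  have hVdef : V = 1 / (2 * (D + 1)) * A := rfl
  have hV0 : 0 ≤ V := by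
    rw [hVdef]; positivity
  by_cases hV : V ≤ 1 / 2
  · have hmax : max (V - 1 / 2) 0 = 0 := max_eq_right (by linarith)
    rw [hmax]
    have : (2 * (D + 1)) ^ (2 * M + 2) * (0:ℝ) ^ 2 * V ^ (2 * M) = 0 := by ring
    rw [this]
    exact Finset.sum_nonneg hsum_nonneg
  · push_neg at hV
    have hAV : 2 * (D + 1) * V = A := by
      rw [hVdef]; field_simp
    have hAD : D + 1 < A := by nlinarith
    -- LHS equals (A - (D+1))^2 * A^(2M)
    have hLHS : (2 * (D + 1)) ^ (2 * M + 2) * (max (V - 1 / 2) 0) ^ 2 * V ^ (2 * M)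
        = (A - (D + 1)) ^ 2 * A ^ (2 * M) := by
      have hmax : max (V - 1 / 2) 0 = V - 1 / 2 := max_eq_left (by linarith)
      rw [hmax]
      have hsplit : (2 * (D + 1)) ^ (2 * M + 2)
          = (2 * (D + 1)) ^ (2 * M) * (2 * (D + 1)) ^ (2:ℕ) := by
        rw [Real.rpow_add h2D, Real.rpow_two]
      rw [hsplit]
      have hmul : (2 * (D + 1)) ^ (2 * M) * V ^ (2 * M) = A ^ (2 * M) := by
        rw [← Real.mul_rpow (le_of_lt h2D) hV0, hAV]
      have hsq : (2 * (D + 1)) ^ (2:ℕ) * (V - 1 / 2) ^ 2 = (A - (D + 1)) ^ 2 := by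
        have : A - (D + 1) = 2 * (D + 1) * (V - 1 / 2) := by
          rw [← hAV]; ring
        rw [this]; ring
      calc (2 * (D + 1)) ^ (2 * M) * (2 * (D + 1)) ^ (2:ℕ) * (V - 1 / 2) ^ 2 * V ^ (2 * M)
          = ((2 * (D + 1)) ^ (2:ℕ) * (V - 1 / 2) ^ 2)
            * ((2 * (D + 1)) ^ (2 * M) * V ^ (2 * M)) := by ring
        _ = (A - (D + 1)) ^ 2 * A ^ (2 * M) := by rw [hsq, hmul]
    rw [hLHS]
    have hterm : (A - (D + 1)) ^ 2 * A ^ (2 * M)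
        ≤ (max (|ξ i| - δ i - ε) 0) ^ 2 * |ξ i| ^ (2 * M) := by
      rw [← hAi]
      have h1 : 0 ≤ A - (D + 1) := by linarith
      have h2 : A - (D + 1) ≤ A - δ i - ε := by linarith
      have h3 : max (A - δ i - ε) 0 = A - δ i - ε := max_eq_left (by linarith)
      rw [h3]
      have : (A - (D + 1)) ^ 2 ≤ (A - δ i - ε) ^ 2 := by nlinarith
      exact mul_le_mul_of_nonneg_right this (Real.rpow_nonneg hA0 _)
    calc (A - (D + 1)) ^ 2 * A ^ (2 * M)
        ≤ (max (|ξ i| - δ i - ε) 0) ^ 2 * |ξ i| ^ (2 * M) := hterm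
      _ ≤ ∑ k, (max (|ξ k| - δ k - ε) 0) ^ 2 * |ξ k| ^ (2 * M) :=
        Finset.single_le_sum hsum_nonneg (Finset.mem_univ i)
end

section
/- Let n ≥ 1 be an integer and, for integers j ≥ 0, set M_j = 2^{j+1} − 1, γ_j = 2M_j = 2^{j+2} − 2, and γ̂_j = 2M_j + 4(M_j + 1)/n. For j ≥ 1 define τ_j = ((γ̂_j − γ_j)/(γ̂_j − γ_{j−1}))·(γ_{j−1}/γ_j). Then for every j ≥ 1: τ_j ∈ (0, 1), 1/γ_j = τ_j/γ_{j−1} + (1 − τ_j)/γ̂_j, τ_j·γ_j/γ_{j−1} = 4/(n+4), and (1 − τ_j)·γ_j/γ̂_j = n/(n+4). -/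
/-!
Write `a = γ_{j-1}`, `g = γ_j`, `h = γ̂_j`. For any `0 < a < g < h` the weight
`τ = (h - g)/(h - a) · a/g` is the one that writes `1/g` as a convex combination of `1/a` and
`1/h`, and then `τ g/a = (h - g)/(h - a)` and `(1 - τ) g/h = (g - a)/(h - a)`.
Here `γ_j - γ_{j-1} = 2^{j+1}` and `γ̂_j - γ_j = 2^{j+3}/n`, so `n (h - g) = 4 (g - a)`,
which turns these two ratios into `4/(n+4)` and `n/(n+4)`.
-/

section HarmonicWeight

variable {K : Type*} [Field K]

def harmonicWeight (a g h : K) : K := (h - g) / (h - a) * (a / g)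

variable {a g h : K}

theorem harmonicWeight_mul_div (ha : a ≠ 0) (hg : g ≠ 0) :
    harmonicWeight a g h * g / a = (h - g) / (h - a) := by
  unfold harmonicWeight
  field_simp

theorem one_sub_harmonicWeight (hg : g ≠ 0) (hha : h - a ≠ 0) :
    1 - harmonicWeight a g h = h * (g - a) / ((h - a) * g) := by
  unfold harmonicWeight
  field_simp
  ring

theorem one_sub_harmonicWeight_mul_div (hg : g ≠ 0) (hh : h ≠ 0) (hha : h - a ≠ 0) :
    (1 - harmonicWeight a g h) * g / h = (g - a) / (h - a) := by
  rw [one_sub_harmonicWeight hg hha]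
  field_simp

theorem one_div_eq_harmonicWeight_div_add (ha : a ≠ 0) (hg : g ≠ 0) (hh : h ≠ 0)
    (hha : h - a ≠ 0) :
    1 / g = harmonicWeight a g h / a + (1 - harmonicWeight a g h) / h := by
  rw [one_sub_harmonicWeight hg hha]
  unfold harmonicWeight
  field_simp
  ring

variable [LinearOrder K] [IsStrictOrderedRing K]

theorem harmonicWeight_pos (ha : 0 < a) (hag : a < g) (hgh : g < h) :
    0 < harmonicWeight a g h :=
  mul_pos (div_pos (sub_pos.2 hgh) (by linarith)) (div_pos ha (ha.trans hag))

theorem harmonicWeight_lt_one (ha : 0 < a) (hag : a < g) (hgh : g < h) :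
    harmonicWeight a g h < 1 := by
  have hg : 0 < g := ha.trans hag
  have hha : 0 < h - a := by linarith
  have : 0 < 1 - harmonicWeight a g h := by
    rw [one_sub_harmonicWeight hg.ne' hha.ne']
    have : 0 < g - a := sub_pos.2 hag
    have : 0 < h := hg.trans hgh
    positivity
  linarith

end HarmonicWeight

theorem sub_div_sub_eq_of_mul_sub_eq {K : Type*} [Field K] {a g h p q : K}
    (hq : q ≠ 0) (hpq : p + q ≠ 0) (hga : g - a ≠ 0) (hsteps : q * (h - g) = p * (g - a)) :
    (h - g) / (h - a) = p / (p + q) ∧ (g - a) / (h - a) = q / (p + q) := by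
  have hsum : q * (h - a) = (p + q) * (g - a) := by linear_combination hsteps
  have hha : h - a ≠ 0 := by
    rintro h0
    rw [h0, mul_zero, eq_comm] at hsum
    exact mul_ne_zero hpq hga hsum
  constructor
  · rw [div_eq_div_iff hha hpq]
    apply mul_left_cancel₀ hq
    linear_combination (p + q) * hsteps - p * hsum
  · rw [div_eq_div_iff hha hpq]
    linear_combination -hsum

/-- Let `n ≥ 1` be an integer and, for integers `j ≥ 0`, set `M_j = 2^{j+1} − 1`,
`γ_j = 2M_j = 2^{j+2} − 2`, and `γ̂_j = 2M_j + 4(M_j + 1)/n`. For `j ≥ 1` define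
`τ_j = ((γ̂_j − γ_j)/(γ̂_j − γ_{j−1}))·(γ_{j−1}/γ_j)`. Then for every `j ≥ 1`:
`τ_j ∈ (0, 1)`, `1/γ_j = τ_j/γ_{j−1} + (1 − τ_j)/γ̂_j`,
`τ_j·γ_j/γ_{j−1} = 4/(n+4)`, and `(1 − τ_j)·γ_j/γ̂_j = n/(n+4)`. -/
theorem stmt15 (n : ℕ) (hn : 1 ≤ n) (j : ℕ) (hj : 1 ≤ j) :
    let Mexp : ℕ → ℚ := fun i => 2 ^ (i + 1) - 1
    let γ : ℕ → ℚ := fun i => 2 * Mexp i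
    let γhat : ℕ → ℚ := fun i => 2 * Mexp i + 4 * (Mexp i + 1) / (n : ℚ)
    let τ : ℚ := (γhat j - γ j) / (γhat j - γ (j - 1)) * (γ (j - 1) / γ j)
    0 < τ ∧ τ < 1 ∧
      1 / γ j = τ / γ (j - 1) + (1 - τ) / γhat j ∧
      τ * γ j / γ (j - 1) = 4 / ((n : ℚ) + 4) ∧
      (1 - τ) * γ j / γhat j = (n : ℚ) / ((n : ℚ) + 4) := by
  obtain ⟨k, rfl⟩ : ∃ k, j = k + 1 := ⟨j - 1, (Nat.succ_pred_eq_of_pos hj).symm⟩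
  intro Mexp γ γhat τ
  have hn0 : (0 : ℚ) < n := by exact_mod_cast hn
  have hx : (2 : ℚ) ≤ 2 ^ (k + 1) := le_self_pow₀ one_le_two (Nat.succ_ne_zero k)
  have ha : γ (k + 1 - 1) = 2 * 2 ^ (k + 1) - 2 := by
    simp only [γ, Mexp, Nat.add_sub_cancel]; ring
  have hg : γ (k + 1) = 4 * 2 ^ (k + 1) - 2 := by simp only [γ, Mexp]; ring
  have hh : γhat (k + 1) = γ (k + 1) + 8 * 2 ^ (k + 1) / n := by simp only [γhat, γ, Mexp]; ring
  have ha0 : 0 < γ (k + 1 - 1) := by rw [ha]; linarith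
  have hag : γ (k + 1 - 1) < γ (k + 1) := by rw [ha, hg]; linarith
  have hgh : γ (k + 1) < γhat (k + 1) := by
    rw [hh]; linarith [show (0 : ℚ) < 8 * 2 ^ (k + 1) / n by positivity]
  have hsteps : (n : ℚ) * (γhat (k + 1) - γ (k + 1)) = 4 * (γ (k + 1) - γ (k + 1 - 1)) := by
    rw [hh, ha, hg]; field_simp; ring
  have hg0 : γ (k + 1) ≠ 0 := (ha0.trans hag).ne'
  have hh0 : γhat (k + 1) ≠ 0 := (ha0.trans (hag.trans hgh)).ne'
  have hha : γhat (k + 1) - γ (k + 1 - 1) ≠ 0 := by linarith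
  obtain ⟨hratio, hratio'⟩ :=
    sub_div_sub_eq_of_mul_sub_eq hn0.ne' (by positivity) (sub_pos.2 hag).ne' hsteps
  rw [show τ = harmonicWeight (γ (k + 1 - 1)) (γ (k + 1)) (γhat (k + 1)) from rfl]
  refine ⟨harmonicWeight_pos ha0 hag hgh, harmonicWeight_lt_one ha0 hag hgh,
    one_div_eq_harmonicWeight_div_add ha0.ne' hg0 hh0 hha, ?_, ?_⟩
  · rw [harmonicWeight_mul_div ha0.ne' hg0, hratio, add_comm]
  · rw [one_sub_harmonicWeight_mul_div hg0 hh0 hha, hratio', add_comm]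
end

section
/- Let n ≥ 1, p ≥ 2 and δ₁, …, δ_n ≥ 0. Then for every w, z ∈ ℝⁿ one has ∑_{i=1}^n (J_{δ_i}(w_i) − J_{δ_i}(z_i))·(w_i − z_i) ≥ (4/p²)·∑_{i=1}^n |H_{δ_i}(w_i) − H_{δ_i}(z_i)|². -/
open Real

noncomputable def clampF (lam s : ℝ) : ℝ := max (-lam) (min lam s)
noncomputable def Tfun (lam s : ℝ) : ℝ := s - clampF lam s
noncomputable def phiF (p x : ℝ) : ℝ := |x| ^ (p - 1) * Real.sign x
noncomputable def psiF (p x : ℝ) : ℝ := |x| ^ (p / 2) * Real.sign x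

lemma clamp_facts (lam u v : ℝ) (h : v ≤ u) :
    clampF lam v ≤ clampF lam u ∧ clampF lam u - clampF lam v ≤ u - v := by
  unfold clampF
  rcases le_total lam u with h1|h1 <;> rcases le_total lam v with h2|h2 <;>
    rcases le_total u (-lam) with h3|h3 <;> rcases le_total v (-lam) with h4|h4 <;>
    constructor <;> simp [max_def, min_def] <;> split_ifs <;> linarith

lemma Tfun_mono (lam : ℝ) {u v : ℝ} (h : v ≤ u) : Tfun lam v ≤ Tfun lam u := by
  have := clamp_facts lam u v h
  unfold Tfun; linarith [this.2]

lemma phiF_of_nonneg {p : ℝ} (hp : 2 ≤ p) {x : ℝ} (hx : 0 ≤ x) :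
    phiF p x = x ^ (p - 1) := by
  rcases eq_or_lt_of_le hx with rfl|hx
  · simp [phiF, Real.zero_rpow (by linarith : p - 1 ≠ 0)]
  · simp [phiF, abs_of_pos hx, Real.sign_of_pos hx]

lemma psiF_of_nonneg {p : ℝ} (hp : 2 ≤ p) {x : ℝ} (hx : 0 ≤ x) :
    psiF p x = x ^ (p / 2) := by
  rcases eq_or_lt_of_le hx with rfl|hx
  · simp [psiF, Real.zero_rpow (show (p:ℝ)/2 ≠ 0 by positivity)]
  · simp [psiF, abs_of_pos hx, Real.sign_of_pos hx]

lemma phiF_neg (p x : ℝ) : phiF p (-x) = - phiF p x := by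
  simp [phiF, Real.sign_neg]

lemma psiF_neg (p x : ℝ) : psiF p (-x) = - psiF p x := by
  simp [psiF, Real.sign_neg]

lemma phiF_mono {p : ℝ} (hp : 2 ≤ p) {a b : ℝ} (h : a ≤ b) : phiF p a ≤ phiF p b := by
  have hp1 : (0:ℝ) ≤ p - 1 := by linarith
  rcases le_or_gt 0 a with ha|ha
  · rw [phiF_of_nonneg hp ha, phiF_of_nonneg hp (ha.trans h)]
    exact Real.rpow_le_rpow ha h hp1
  · rcases le_or_gt 0 b with hb|hb
    · have ea : phiF p a = -phiF p (-a) := by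
        have := phiF_neg p (-a); rw [neg_neg] at this; linarith
      have h1 : phiF p a ≤ 0 := by
        rw [ea, phiF_of_nonneg hp (by linarith : (0:ℝ) ≤ -a)]
        simp only [neg_nonpos]
        exact Real.rpow_nonneg (by linarith) _
      have h2 : 0 ≤ phiF p b := by rw [phiF_of_nonneg hp hb]; exact Real.rpow_nonneg hb _
      linarith
    · have ea : phiF p a = -phiF p (-a) := by
        have := phiF_neg p (-a); rw [neg_neg] at this; linarith
      have eb : phiF p b = -phiF p (-b) := by
        have := phiF_neg p (-b); rw [neg_neg] at this; linarith
      rw [ea, eb, phiF_of_nonneg hp (by linarith : (0:ℝ) ≤ -a),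
        phiF_of_nonneg hp (by linarith : (0:ℝ) ≤ -b)]
      have := Real.rpow_le_rpow (by linarith : (0:ℝ) ≤ -b) (by linarith : -b ≤ -a) hp1
      linarith

/-- tangent line inequality: x^q - y^q ≤ q x^{q-1}(x-y) for 1 ≤ q, 0 ≤ y ≤ x. -/
lemma tangent {q x y : ℝ} (hq : 1 ≤ q) (hy : 0 ≤ y) (hxy : y ≤ x) :
    x ^ q - y ^ q ≤ q * x ^ (q - 1) * (x - y) := by
  have hx : 0 ≤ x := hy.trans hxy
  rcases eq_or_lt_of_le hx with rfl|hx
  · have : y = 0 := le_antisymm hxy hy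
    subst this
    simp [Real.zero_rpow (by linarith : q ≠ 0)]
  · have hb := one_add_mul_self_le_rpow_one_add (s := y / x - 1) (by
      have : 0 ≤ y / x := by positivity
      linarith) hq
    rw [show (1 : ℝ) + (y / x - 1) = y / x by ring,
      Real.div_rpow hy hx.le q] at hb
    have hxq : (0:ℝ) < x ^ q := Real.rpow_pos_of_pos hx q
    have hb2 : x ^ q * (1 + q * (y / x - 1)) ≤ y ^ q := by
      have := mul_le_mul_of_nonneg_left hb hxq.le
      rwa [mul_div_cancel₀ _ hxq.ne'] at this
    have e1 : x ^ (q - 1) * x = x ^ q := by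
      rw [← Real.rpow_add_one hx.ne' (q - 1)]
      ring_nf
    have hx' : x * (y / x) = y := by field_simp
    have key : x * (x ^ q - y ^ q) ≤ x * (q * x ^ (q - 1) * (x - y)) := by
      have hb3 : x * x ^ q + q * x ^ q * y - q * x ^ q * x ≤ x * y ^ q := by
        have h := mul_le_mul_of_nonneg_left hb2 hx.le
        have e : x * (x ^ q * (1 + q * (y / x - 1)))
            = x * x ^ q + q * x ^ q * y - q * x ^ q * x := by
          field_simp; ring
        linarith [e ▸ h]
      have egoal : x * (q * x ^ (q - 1) * (x - y)) = q * x ^ q * x - q * x ^ q * y := by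
        have e : x * (q * x ^ (q - 1) * (x - y)) = q * (x ^ (q - 1) * x) * (x - y) := by ring
        rw [e, e1]; ring
      rw [egoal]; linarith
    exact le_of_mul_le_mul_left key hx

/-- core positive inequality -/
lemma pos_core {p x y : ℝ} (hp : 2 ≤ p) (hy : 0 ≤ y) (hxy : y ≤ x) :
    4 / p ^ 2 * (x ^ (p / 2) - y ^ (p / 2)) ^ 2 ≤ (x ^ (p - 1) - y ^ (p - 1)) * (x - y) := by
  have hx : 0 ≤ x := hy.trans hxy
  have hp0 : (0:ℝ) < p := by linarith
  rcases eq_or_lt_of_le hx with rfl|hx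
  · have : y = 0 := le_antisymm hxy hy
    subst this
    simp
  · have hq : (1:ℝ) ≤ p / 2 := by linarith
    have ht := tangent hq hy hxy
    have hd : 0 ≤ x ^ (p / 2) - y ^ (p / 2) := by
      have := Real.rpow_le_rpow hy hxy (by linarith : (0:ℝ) ≤ p / 2)
      linarith
    have hsq : (x ^ (p / 2) - y ^ (p / 2)) ^ 2 ≤
        (p / 2) ^ 2 * (x ^ (p / 2 - 1)) ^ 2 * (x - y) ^ 2 := by
      have h2 := mul_self_le_mul_self hd ht
      have e : (p / 2 * x ^ (p / 2 - 1) * (x - y)) * (p / 2 * x ^ (p / 2 - 1) * (x - y))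
          = (p / 2) ^ 2 * (x ^ (p / 2 - 1)) ^ 2 * (x - y) ^ 2 := by ring
      rw [e] at h2
      calc (x ^ (p / 2) - y ^ (p / 2)) ^ 2
          = (x ^ (p / 2) - y ^ (p / 2)) * (x ^ (p / 2) - y ^ (p / 2)) := by ring
        _ ≤ _ := h2
    have e2 : (x ^ (p / 2 - 1)) ^ 2 = x ^ (p - 2) := by
      rw [← Real.rpow_natCast (x ^ (p / 2 - 1)) 2, ← Real.rpow_mul hx.le]
      norm_num
      ring_nf
    rw [e2] at hsq
    have h3 : 4 / p ^ 2 * (x ^ (p / 2) - y ^ (p / 2)) ^ 2 ≤ x ^ (p - 2) * (x - y) ^ 2 := by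
      have h4 : 4 / p ^ 2 * ((p / 2) ^ 2 * x ^ (p - 2) * (x - y) ^ 2)
          = x ^ (p - 2) * (x - y) ^ 2 := by
        field_simp
        ring
      calc 4 / p ^ 2 * (x ^ (p / 2) - y ^ (p / 2)) ^ 2
          ≤ 4 / p ^ 2 * ((p / 2) ^ 2 * x ^ (p - 2) * (x - y) ^ 2) := by
            apply mul_le_mul_of_nonneg_left hsq; positivity
        _ = _ := h4
    have e3 : x ^ (p - 2) * x = x ^ (p - 1) := by
      rw [← Real.rpow_add_one hx.ne' (p - 2)]
      ring_nf
    have h5 : y ^ (p - 1) ≤ x ^ (p - 2) * y := by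
      rcases eq_or_lt_of_le hy with rfl|hy'
      · simp [Real.zero_rpow (by linarith : p - 1 ≠ 0)]
      · have e4 : y ^ (p - 2) * y = y ^ (p - 1) := by
          rw [← Real.rpow_add_one hy'.ne' (p - 2)]
          ring_nf
        have : y ^ (p - 2) ≤ x ^ (p - 2) := Real.rpow_le_rpow hy hxy (by linarith)
        nlinarith
    have h6 : x ^ (p - 2) * (x - y) ^ 2 ≤ (x ^ (p - 1) - y ^ (p - 1)) * (x - y) := by
      have h7 : x ^ (p - 2) * (x - y) ≤ x ^ (p - 1) - y ^ (p - 1) := by nlinarith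
      have h8 : 0 ≤ x - y := by linarith
      calc x ^ (p - 2) * (x - y) ^ 2 = (x ^ (p - 2) * (x - y)) * (x - y) := by ring
        _ ≤ _ := mul_le_mul_of_nonneg_right h7 h8
    linarith

lemma mixed {p a c : ℝ} (hp : 2 ≤ p) (ha : 0 < a) (hc : 0 < c) :
    4 / p ^ 2 * (a ^ (p / 2) + c ^ (p / 2)) ^ 2 ≤ (a ^ (p - 1) + c ^ (p - 1)) * (a + c) := by
  have hp0 : (0:ℝ) < p := by linarith
  have h41 : 4 / p ^ 2 ≤ 1 := by
    rw [div_le_one (by positivity)]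
    nlinarith
  have f1 : a ^ (p / 2) * a ^ (p / 2) = a ^ (p - 1) * a := by
    rw [← Real.rpow_add ha, ← Real.rpow_add_one ha.ne' (p - 1)]
    congr 1; ring
  have f2 : c ^ (p / 2) * c ^ (p / 2) = c ^ (p - 1) * c := by
    rw [← Real.rpow_add hc, ← Real.rpow_add_one hc.ne' (p - 1)]
    congr 1; ring
  have gX : a ^ ((p - 1) / 2) * a ^ ((p - 1) / 2) = a ^ (p - 1) := by
    rw [← Real.rpow_add ha]; congr 1; ring
  have gY : c ^ ((p - 1) / 2) * c ^ ((p - 1) / 2) = c ^ (p - 1) := by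
    rw [← Real.rpow_add hc]; congr 1; ring
  have gx : a ^ ((1:ℝ) / 2) * a ^ ((1:ℝ) / 2) = a := by
    rw [← Real.rpow_add ha]; norm_num
  have gy : c ^ ((1:ℝ) / 2) * c ^ ((1:ℝ) / 2) = c := by
    rw [← Real.rpow_add hc]; norm_num
  have gxy : (a ^ ((p - 1) / 2) * c ^ ((1:ℝ) / 2)) * (a ^ ((1:ℝ) / 2) * c ^ ((p - 1) / 2))
      = a ^ (p / 2) * c ^ (p / 2) := by
    rw [show (a ^ ((p - 1) / 2) * c ^ ((1:ℝ) / 2)) * (a ^ ((1:ℝ) / 2) * c ^ ((p - 1) / 2))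
        = (a ^ ((p - 1) / 2) * a ^ ((1:ℝ) / 2)) * (c ^ ((1:ℝ) / 2) * c ^ ((p - 1) / 2)) by ring,
      ← Real.rpow_add ha, ← Real.rpow_add hc]
    congr 1
    · congr 1; ring
    · congr 1; ring
  have amgm : 2 * (a ^ (p / 2) * c ^ (p / 2)) ≤ a ^ (p - 1) * c + a * c ^ (p - 1) := by
    nlinarith [sq_nonneg (a ^ ((p - 1) / 2) * c ^ ((1:ℝ) / 2)
        - a ^ ((1:ℝ) / 2) * c ^ ((p - 1) / 2)), gX, gY, gx, gy, gxy]
  have step1 : (a ^ (p / 2) + c ^ (p / 2)) ^ 2 ≤ (a ^ (p - 1) + c ^ (p - 1)) * (a + c) := by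
    nlinarith [f1, f2, amgm]
  nlinarith [sq_nonneg (a ^ (p / 2) + c ^ (p / 2)), step1, h41]

/-- the scalar inequality for the odd power functions, ordered version -/
lemma key2' {p : ℝ} (hp : 2 ≤ p) {a b : ℝ} (hba : b ≤ a) :
    4 / p ^ 2 * (psiF p a - psiF p b) ^ 2 ≤ (phiF p a - phiF p b) * (a - b) := by
  rcases le_or_gt 0 b with hb|hb
  · rw [phiF_of_nonneg hp hb, phiF_of_nonneg hp (hb.trans hba),
      psiF_of_nonneg hp hb, psiF_of_nonneg hp (hb.trans hba)]
    exact pos_core hp hb hba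
  · rcases le_or_gt a 0 with ha|ha
    · have ea : phiF p a = -phiF p (-a) := by
        have := phiF_neg p (-a); rw [neg_neg] at this; linarith
      have eb : phiF p b = -phiF p (-b) := by
        have := phiF_neg p (-b); rw [neg_neg] at this; linarith
      have ea' : psiF p a = -psiF p (-a) := by
        have := psiF_neg p (-a); rw [neg_neg] at this; linarith
      have eb' : psiF p b = -psiF p (-b) := by
        have := psiF_neg p (-b); rw [neg_neg] at this; linarith
      rw [ea, eb, ea', eb', phiF_of_nonneg hp (by linarith : (0:ℝ) ≤ -a),
        phiF_of_nonneg hp (by linarith : (0:ℝ) ≤ -b),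
        psiF_of_nonneg hp (by linarith : (0:ℝ) ≤ -a),
        psiF_of_nonneg hp (by linarith : (0:ℝ) ≤ -b)]
      have h := pos_core hp (by linarith : (0:ℝ) ≤ -a) (by linarith : -a ≤ -b)
      calc 4 / p ^ 2 * (-(-a) ^ (p / 2) - -(-b) ^ (p / 2)) ^ 2
          = 4 / p ^ 2 * ((-b) ^ (p / 2) - (-a) ^ (p / 2)) ^ 2 := by ring
        _ ≤ ((-b) ^ (p - 1) - (-a) ^ (p - 1)) * (-b - -a) := h
        _ = (-(-a) ^ (p - 1) - -(-b) ^ (p - 1)) * (a - b) := by ring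
    · have eb : phiF p b = -phiF p (-b) := by
        have := phiF_neg p (-b); rw [neg_neg] at this; linarith
      have eb' : psiF p b = -psiF p (-b) := by
        have := psiF_neg p (-b); rw [neg_neg] at this; linarith
      rw [phiF_of_nonneg hp ha.le, psiF_of_nonneg hp ha.le, eb, eb',
        phiF_of_nonneg hp (by linarith : (0:ℝ) ≤ -b),
        psiF_of_nonneg hp (by linarith : (0:ℝ) ≤ -b)]
      have h := mixed hp ha (by linarith : (0:ℝ) < -b)
      calc 4 / p ^ 2 * (a ^ (p / 2) - -(-b) ^ (p / 2)) ^ 2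
          = 4 / p ^ 2 * (a ^ (p / 2) + (-b) ^ (p / 2)) ^ 2 := by ring
        _ ≤ (a ^ (p - 1) + (-b) ^ (p - 1)) * (a + -b) := h
        _ = (a ^ (p - 1) - -(-b) ^ (p - 1)) * (a - b) := by ring

lemma key2 {p : ℝ} (hp : 2 ≤ p) (a b : ℝ) :
    4 / p ^ 2 * (psiF p a - psiF p b) ^ 2 ≤ (phiF p a - phiF p b) * (a - b) := by
  rcases le_total b a with h|h
  · exact key2' hp h
  · have := key2' hp h
    calc 4 / p ^ 2 * (psiF p a - psiF p b) ^ 2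
        = 4 / p ^ 2 * (psiF p b - psiF p a) ^ 2 := by ring
      _ ≤ (phiF p b - phiF p a) * (b - a) := this
      _ = (phiF p a - phiF p b) * (a - b) := by ring

/-- rewriting `Jfun`/`Hfun` through the truncation. -/
lemma gen_rep {lam : ℝ} (hlam : 0 ≤ lam) (e : ℝ) (he : 0 < e) (s : ℝ) :
    (if s = 0 then (0:ℝ) else (max (|s| - lam) 0) ^ e * (s / |s|))
      = |Tfun lam s| ^ e * Real.sign (Tfun lam s) := by
  split_ifs with h
  · subst h
    have hT : Tfun lam 0 = 0 := by
      simp [Tfun, clampF, min_eq_right hlam, max_eq_right (neg_nonpos_of_nonneg hlam)]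
    simp [hT]
  · rcases lt_or_gt_of_ne h with hs|hs
    · -- s < 0
      have habs : |s| = -s := abs_of_neg hs
      have hdiv : s / |s| = -1 := by rw [habs]; field_simp
      rcases le_or_gt (-lam) s with h1|h1
      · -- -lam ≤ s < 0 : truncation is 0
        have hT : Tfun lam s = 0 := by
          have : min lam s = s := min_eq_right (by linarith)
          simp [Tfun, clampF, this, max_eq_right h1]
        have hmax : max (|s| - lam) 0 = 0 := by
          rw [habs]; exact max_eq_right (by linarith)
        rw [hT, hmax, hdiv]
        simp [Real.zero_rpow he.ne']
      · -- s < -lam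
        have hT : Tfun lam s = s + lam := by
          have h2 : min lam s = s := min_eq_right (by linarith)
          have h3 : max (-lam) s = -lam := max_eq_left (by linarith)
          simp [Tfun, clampF, h2, h3]
        have hmax : max (|s| - lam) 0 = -s - lam := by
          rw [habs]; exact max_eq_left (by linarith)
        have hTneg : s + lam < 0 := by linarith
        rw [hT, hmax, hdiv, abs_of_neg hTneg, Real.sign_of_neg hTneg]
        have : -(s + lam) = -s - lam := by ring
        rw [this]
    · -- 0 < s
      have habs : |s| = s := abs_of_pos hs
      have hdiv : s / |s| = 1 := by rw [habs]; field_simp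
      rcases le_or_gt s lam with h1|h1
      · have hT : Tfun lam s = 0 := by
          have h2 : min lam s = s := min_eq_right h1
          simp [Tfun, clampF, h2, max_eq_right (by linarith : -lam ≤ s)]
        have hmax : max (|s| - lam) 0 = 0 := by
          rw [habs]; exact max_eq_right (by linarith)
        rw [hT, hmax, hdiv]
        simp [Real.zero_rpow he.ne']
      · have hT : Tfun lam s = s - lam := by
          have h2 : min lam s = lam := min_eq_left (by linarith)
          simp [Tfun, clampF, h2, max_eq_right (by linarith : -lam ≤ lam)]
        have hTpos : (0:ℝ) < s - lam := by linarith
        have hmax : max (|s| - lam) 0 = s - lam := by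
          rw [habs]; exact max_eq_left (by linarith)
        rw [hT, hmax, hdiv, abs_of_pos hTpos, Real.sign_of_pos hTpos]

lemma Jfun_rep {p lam : ℝ} (hp : 2 ≤ p) (hlam : 0 ≤ lam) (s : ℝ) :
    Jfun p lam s = phiF p (Tfun lam s) := by
  unfold Jfun phiF
  exact gen_rep hlam (p - 1) (by linarith) s

lemma Hfun_rep {p lam : ℝ} (hp : 2 ≤ p) (hlam : 0 ≤ lam) (s : ℝ) :
    Hfun p lam s = psiF p (Tfun lam s) := by
  unfold Hfun psiF
  exact gen_rep hlam (p / 2) (by linarith) s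

lemma key_scalar {p lam : ℝ} (hp : 2 ≤ p) (hlam : 0 ≤ lam) (u v : ℝ) :
    4 / p ^ 2 * |Hfun p lam u - Hfun p lam v| ^ 2
      ≤ (Jfun p lam u - Jfun p lam v) * (u - v) := by
  rw [sq_abs, Jfun_rep hp hlam, Jfun_rep hp hlam, Hfun_rep hp hlam, Hfun_rep hp hlam]
  set a := Tfun lam u with ha
  set b := Tfun lam v with hb
  have h1 := key2 hp a b
  have h2 : 0 ≤ (phiF p a - phiF p b) * ((u - v) - (a - b)) := by
    have hcl : (u - v) - (a - b) = clampF lam u - clampF lam v := by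
      rw [ha, hb]; unfold Tfun; ring
    rw [hcl]
    rcases le_total v u with h|h
    · have hm := (clamp_facts lam u v h).1
      have hT : b ≤ a := Tfun_mono lam h
      exact mul_nonneg (by linarith [phiF_mono hp hT]) (by linarith)
    · have hm := (clamp_facts lam v u h).1
      have hT : a ≤ b := Tfun_mono lam h
      have h3 := mul_nonneg (sub_nonneg.2 (phiF_mono hp hT)) (sub_nonneg.2 hm)
      nlinarith [h3]
  have e : (phiF p a - phiF p b) * (u - v)
      = (phiF p a - phiF p b) * (a - b) + (phiF p a - phiF p b) * ((u - v) - (a - b)) := by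
    ring
  linarith [e]

/-- Let `n ≥ 1`, `p ≥ 2` and `δ₁, …, δ_n ≥ 0`. Then for every `w, z ∈ ℝⁿ` one has
`∑ᵢ (J_{δᵢ}(wᵢ) − J_{δᵢ}(zᵢ))·(wᵢ − zᵢ) ≥ (4/p²)·∑ᵢ |H_{δᵢ}(wᵢ) − H_{δᵢ}(zᵢ)|²`. -/
theorem stmt18 (n : ℕ) (hn : 1 ≤ n) (p : ℝ) (hp : 2 ≤ p) (δ : Fin n → ℝ)
    (hδ : ∀ i, 0 ≤ δ i) (w z : Fin n → ℝ) :
    ∑ i, (Jfun p (δ i) (w i) - Jfun p (δ i) (z i)) * (w i - z i) ≥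
      4 / p ^ 2 * ∑ i, |Hfun p (δ i) (w i) - Hfun p (δ i) (z i)| ^ 2 := by
  rw [ge_iff_le, Finset.mul_sum]
  exact Finset.sum_le_sum fun i _ => key_scalar hp (hδ i) (w i) (z i)
end
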